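/- Let g : (0,∞) → (0,∞) be continuous and nonincreasing and let h ∈ C²((0,η]) ∩ C([0,η]) satisfy h'' = -g∘h on (0,η), h(0) = 0, h > 0 and h' > 0 on (0,η]. Then h'(0⁺) := lim_{t→0⁺} h'(t) is finite if and only if ∫₀¹ g(s) ds < +∞ (equivalently, ∫₀^{h(η)} g(s) ds < ∞). -/

import Mathlib

/-!
Along the solution the energy `h'(t)² - 2 ∫_{h t}^{h η} g` has derivative
`2 h' h'' + 2 g(h) h' = 0`, so `h'(t)²` and `2 ∫_{h t}^{h η} g` differ by a constant on `(0, η)`.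
Since `h'` is decreasing, `h'(0⁺)` exists iff `h'` is bounded near `0`; since `g > 0` and
`h(t) → 0⁺`, `g` is integrable near `0` iff `∫_{h t}^{h η} g` stays bounded as `t → 0⁺`.
-/

open Set Filter MeasureTheory Topology

theorem ContinuousOn.hasDerivAt_integral_Ioi {g : ℝ → ℝ} (hg : ContinuousOn g (Ioi 0))
    {a x : ℝ} (ha : 0 < a) (hx : 0 < x) :
    HasDerivAt (fun u => ∫ s in a..u, g s) (g x) x :=
  intervalIntegral.integral_hasDerivAt_right
    ((hg.mono fun _ hy => (lt_min ha hx).trans_le hy.1).intervalIntegrable)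
    (hg.stronglyMeasurableAtFilter isOpen_Ioi x hx) (hg.continuousAt (Ioi_mem_nhds hx))

noncomputable def energy (g : ℝ → ℝ) (β : ℝ) (h hd : ℝ → ℝ) (t : ℝ) : ℝ :=
  hd t ^ 2 - 2 * ∫ x in h t..β, g x

section Energy

variable {g h hd : ℝ → ℝ} {β t : ℝ}

theorem hasDerivAt_energy (hg : ContinuousOn g (Ioi 0)) (hβ : 0 < β) (hpos : 0 < h t)
    (hh : HasDerivAt h (hd t) t) (hhd : HasDerivAt hd (-g (h t)) t) :
    HasDerivAt (energy g β h hd) 0 t := by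
  have hG : HasDerivAt (fun t => ∫ x in h t..β, g x) (-(g (h t) * hd t)) t := by
    simp_rw [intervalIntegral.integral_symm β]
    exact ((hg.hasDerivAt_integral_Ioi hβ hpos).comp t hh).neg
  exact ((hhd.fun_pow 2).sub (hG.const_mul 2)).congr_deriv (by ring)

theorem energy_eq_of_mem_Ioo {a b s : ℝ} (hg : ContinuousOn g (Ioi 0)) (hβ : 0 < β)
    (hpos : ∀ t ∈ Ioo a b, 0 < h t) (hh : ∀ t ∈ Ioo a b, HasDerivAt h (hd t) t)
    (hhd : ∀ t ∈ Ioo a b, HasDerivAt hd (-g (h t)) t) (hs : s ∈ Ioo a b) (ht : t ∈ Ioo a b) :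
    energy g β h hd s = energy g β h hd t := by
  have hE : ∀ t ∈ Ioo a b, HasDerivAt (energy g β h hd) 0 t := fun t ht =>
    hasDerivAt_energy hg hβ (hpos t ht) (hh t ht) (hhd t ht)
  exact isOpen_Ioo.is_const_of_deriv_eq_zero isPreconnected_Ioo
    (fun t ht => (hE t ht).differentiableAt.differentiableWithinAt)
    (fun t ht => (hE t ht).deriv) hs ht

end Energy

theorem AntitoneOn.exists_tendsto_nhdsGT_iff {α β : Type*} [LinearOrder α] [TopologicalSpace α]
    [OrderTopology α] [DenselyOrdered α] [ConditionallyCompleteLinearOrder β] [TopologicalSpace β]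
    [OrderTopology β] {f : α → β} {a b : α} (hab : a < b) (hf : AntitoneOn f (Ioo a b)) :
    (∃ L, Tendsto f (𝓝[>] a) (𝓝 L)) ↔ IsBoundedUnder (· ≤ ·) (𝓝[>] a) f := by
  refine ⟨fun ⟨L, hL⟩ => hL.isBoundedUnder_le, fun ⟨M, hM⟩ => ?_⟩
  obtain ⟨c, hac, hc⟩ := (mem_nhdsGT_iff_exists_Ioo_subset' hab).1 (eventually_map.1 hM)
  have hsub : Ioo a (min c b) ⊆ Ioo a c := Ioo_subset_Ioo_right (min_le_left c b)
  refine ⟨_, (hf.mono (Ioo_subset_Ioo_right (min_le_right c b))).tendsto_nhdsWithin_Ioo_right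
    (nonempty_Ioo.2 (lt_min hac hab)) ⟨M, ?_⟩⟩
  rintro _ ⟨t, ht, rfl⟩
  exact hc (hsub ht)

theorem isBoundedUnder_le_iff_of_sq_eq {ι : Type*} {l : Filter ι} {u v : ι → ℝ} {K : ℝ}
    (hu : ∀ᶠ i in l, 0 ≤ u i) (huv : ∀ᶠ i in l, u i ^ 2 = K + 2 * v i) :
    IsBoundedUnder (· ≤ ·) l u ↔ IsBoundedUnder (· ≤ ·) l v := by
  constructor
  · rintro ⟨M, hM⟩
    refine isBoundedUnder_of_eventually_le (a := (M ^ 2 - K) / 2) ?_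
    filter_upwards [hu, huv, eventually_map.1 hM] with i hui huvi hMi
    nlinarith
  · rintro ⟨N, hN⟩
    refine isBoundedUnder_of_eventually_le (a := Real.sqrt (K + 2 * N)) ?_
    filter_upwards [hu, huv, eventually_map.1 hN] with i hui huvi hNi
    exact Real.le_sqrt_of_sq_le (by linarith)

theorem integrableOn_Ioc_zero_iff_isBoundedUnder {ι : Type*} {l : Filter ι} [l.NeBot]
    [l.IsCountablyGenerated] {g : ℝ → ℝ} {φ : ι → ℝ} {b : ℝ} (hg : ContinuousOn g (Ioi 0)) (hg0 : ∀ x > 0, 0 ≤ g x) (hb : 0 < b)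
    (hφ : Tendsto φ l (𝓝[>] 0)) :
    IntegrableOn g (Ioc 0 b) ↔ IsBoundedUnder (· ≤ ·) l (fun i => ∫ x in φ i..b, g x) := by
  have hφb : ∀ᶠ i in l, φ i ∈ Ioo 0 b := hφ.eventually (Ioo_mem_nhdsGT hb)
  have hint_eq {i : ι} (hi : φ i ∈ Ioo 0 b) :
      ∫ x in φ i..b, g x = ∫ x in Ioc (φ i) b, ‖g x‖ := by
    rw [intervalIntegral.integral_of_le hi.2.le]
    refine setIntegral_congr_fun measurableSet_Ioc fun x hx => ?_
    exact (Real.norm_of_nonneg (hg0 x (hi.1.trans hx.1))).symm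
  constructor
  · intro hint
    refine isBoundedUnder_of_eventually_le (a := ∫ x in Ioc 0 b, ‖g x‖) ?_
    filter_upwards [hφb] with i hi
    rw [hint_eq hi]
    exact setIntegral_mono_set hint.norm (ae_of_all _ fun _ => norm_nonneg _)
      (Ioc_subset_Ioc_left hi.1.le).eventuallyLE
  · rintro ⟨M, hM⟩
    -- cut `φ` off to stay in `(0, b]`, so that `g` is integrable on every `Ioc (a i) b`
    set a : ι → ℝ := fun i => if φ i ∈ Ioo 0 b then φ i else b
    have ha_eq : ∀ᶠ i in l, a i = φ i := hφb.mono fun i hi => if_pos hi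
    have ha_pos : ∀ i, 0 < a i := fun i => by
      by_cases hi : φ i ∈ Ioo 0 b
      · simp only [a, if_pos hi]; exact hi.1
      · simp only [a, if_neg hi]; exact hb
    refine integrableOn_Ioc_of_intervalIntegral_norm_bounded_left (I := M) (a := a)
      (fun i => ((hg.mono fun x hx => (ha_pos i).trans_le hx.1).integrableOn_Icc).mono_set
        Ioc_subset_Icc_self)
      ((tendsto_nhds_of_tendsto_nhdsWithin hφ).congr' (ha_eq.mono fun _ h => h.symm)) ?_
    filter_upwards [hφb, ha_eq, eventually_map.1 hM] with i hi hai hMi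
    rwa [hai, ← hint_eq hi]

theorem stmt6_general (g : ℝ → ℝ) (η : ℝ) (hη : 0 < η)
    (hgc : ContinuousOn g (Ioi 0)) (hgpos : ∀ s > (0:ℝ), 0 < g s)
    (h hd : ℝ → ℝ)
    (hhc : ContinuousOn h (Icc 0 η))
    (hd1 : ∀ t ∈ Ioc 0 η, HasDerivWithinAt h (hd t) (Ioc 0 η) t)
    (hd2 : ∀ t ∈ Ioo 0 η, HasDerivWithinAt hd (-(g (h t))) (Ioc 0 η) t)
    (h0 : h 0 = 0) (hhpos : ∀ t ∈ Ioc 0 η, 0 < h t)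
    (hdpos : ∀ t ∈ Ioc 0 η, 0 < hd t) :
    (∃ L : ℝ, Tendsto hd (nhdsWithin 0 (Ioi 0)) (nhds L)) ↔
      IntegrableOn g (Ioo 0 (h η)) := by
  have hpos : ∀ t ∈ Ioo 0 η, 0 < h t := fun t ht => hhpos t (Ioo_subset_Ioc_self ht)
  have hh : ∀ t ∈ Ioo 0 η, HasDerivAt h (hd t) t := fun t ht =>
    (hd1 t (Ioo_subset_Ioc_self ht)).hasDerivAt (Ioc_mem_nhds ht.1 ht.2)
  have hhd : ∀ t ∈ Ioo 0 η, HasDerivAt hd (-g (h t)) t := fun t ht =>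
    (hd2 t ht).hasDerivAt (Ioc_mem_nhds ht.1 ht.2)
  have hhd_anti : AntitoneOn hd (Ioo 0 η) :=
    antitoneOn_of_hasDerivWithinAt_nonpos (convex_Ioo 0 η)
      (fun t ht => (hhd t ht).continuousAt.continuousWithinAt)
      (fun t ht => (hhd t (interior_subset ht)).hasDerivWithinAt)
      (fun t ht => neg_nonpos.2 (hgpos _ (hpos t (interior_subset ht))).le)
  have hIoo : Ioo 0 η ∈ 𝓝[>] (0 : ℝ) := Ioo_mem_nhdsGT hη
  have hh_tendsto : Tendsto h (𝓝[>] 0) (𝓝[>] 0) := by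
    refine tendsto_nhdsWithin_iff.2 ⟨?_, eventually_of_mem hIoo hpos⟩
    simpa only [ContinuousWithinAt, h0] using
      (hhc 0 ⟨le_rfl, hη.le⟩).mono_of_mem_nhdsWithin (Icc_mem_nhdsGT hη)
  have hhη : 0 < h η := hhpos η ⟨hη, le_rfl⟩
  obtain ⟨c, hc⟩ : (Ioo 0 η).Nonempty := nonempty_Ioo.2 hη
  rw [hhd_anti.exists_tendsto_nhdsGT_iff hη, ← integrableOn_Ioc_iff_integrableOn_Ioo,
    integrableOn_Ioc_zero_iff_isBoundedUnder hgc (fun x hx => (hgpos x hx).le) hhη hh_tendsto]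
  refine isBoundedUnder_le_iff_of_sq_eq (K := energy g (h η) h hd c) ?_ ?_
  · filter_upwards [hIoo] with t ht using (hdpos t (Ioo_subset_Ioc_self ht)).le
  · filter_upwards [hIoo] with t ht
    rw [← energy_eq_of_mem_Ioo hgc hhη hpos hh hhd ht hc, energy]
    ring

/-- for `h'' = -g(h)`, `h(0)=0`, the limit `h'(0⁺)` is finite iff
`∫₀^{h(η)} g(s) ds < ∞`. -/
theorem stmt6 (g : ℝ → ℝ) (η : ℝ) (hη : 0 < η)
    (hgc : ContinuousOn g (Ioi 0)) (hgpos : ∀ s > (0:ℝ), 0 < g s)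
    (hganti : AntitoneOn g (Ioi 0))
    (h hd : ℝ → ℝ)
    (hhc : ContinuousOn h (Icc 0 η))
    (hd1 : ∀ t ∈ Ioc 0 η, HasDerivWithinAt h (hd t) (Ioc 0 η) t)
    (hd2 : ∀ t ∈ Ioo 0 η, HasDerivWithinAt hd (-(g (h t))) (Ioc 0 η) t)
    (h0 : h 0 = 0) (hhpos : ∀ t ∈ Ioc 0 η, 0 < h t)
    (hdpos : ∀ t ∈ Ioc 0 η, 0 < hd t) :
    (∃ L : ℝ, Tendsto hd (nhdsWithin 0 (Ioi 0)) (nhds L)) ↔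
      IntegrableOn g (Ioo 0 (h η)) :=
  stmt6_general g η hη hgc hgpos h hd hhc hd1 hd2 h0 hhpos hdpos
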